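/- arXiv:2505.02128 — 2 statements merged into one kernel-verified Lean document; each statement's English description precedes it below -/
import Mathlib

section
/- Let q = 2^m with m a positive integer. The map X ↦ X^{1+q} + X^{1+q^2} + X^{2q+2} is a permutation of F_{q^3} if and only if m is not congruent to 1 modulo 3. -/
/-!
Write `q = 2 ^ m`. The map is `L ∘ (x ↦ x ^ (1 + q))` with `L y = y + y ^ 2 + y ^ q ^ 2` additive,
and `x ↦ x ^ (1 + q)` permutes `F` because `gcd (1 + q, q ^ 3 - 1) = 1`; so the map is a
permutation iff `L` has trivial kernel. The Frobenius `y ↦ y ^ q` has order 3 on `F`, and applying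
it to `y ^ q ^ 2 = y + y ^ 2` shows that every `y` in the kernel satisfies `y ^ 8 = y`, so that
`y ^ q ^ 2 = y ^ 2 ^ (2m mod 3)`. For `m ≢ 1 (mod 3)` this forces `y = 0`; for `m ≡ 1` the kernel
contains `u ^ 2 + u` for any seventh root of unity `u ≠ 1`, which exists since `7 ∣ q ^ 3 - 1`.
-/

open Function

lemma pow_injective_of_coprime_card_units {G₀ : Type*} [GroupWithZero G₀] {n : ℕ} (hn : n ≠ 0)
    (h : (Nat.card G₀ˣ).Coprime n) : Injective (· ^ n : G₀ → G₀) := by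
  intro a b hab
  simp only at hab
  rcases eq_or_ne a 0 with rfl | ha
  · rw [zero_pow hn, eq_comm, pow_eq_zero_iff hn] at hab
    exact hab.symm
  rcases eq_or_ne b 0 with rfl | hb
  · rwa [zero_pow hn, pow_eq_zero_iff hn] at hab
  have hunits : Units.mk0 a ha ^ n = Units.mk0 b hb ^ n := Units.ext (by simpa using hab)
  exact congrArg Units.val (h.pow_left_bijective.injective hunits)

lemma Nat.coprime_pow_three_sub_one_one_add {q : ℕ} (hq : Even q) :
    (q ^ 3 - 1).Coprime (1 + q) := by
  obtain ⟨k, rfl⟩ := hq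
  rcases Nat.eq_zero_or_pos k with rfl | hk
  · simp
  rw [← Nat.isCoprime_iff_coprime, Nat.cast_sub (Nat.one_le_pow _ _ (by omega))]
  -- `q ^ 3 - 1 ≡ -2` modulo `1 + q`, which is odd
  exact ⟨k, 1 - k * ((k + k) ^ 2 - (k + k) + 1), by push_cast; ring⟩

lemma pow_pow_eq_pow_pow_mod {M : Type*} [Monoid M] {y : M} {p n : ℕ} (h : y ^ p ^ n = y)
    (k : ℕ) : y ^ p ^ k = y ^ p ^ (k % n) := by
  have hmul : ∀ j, y ^ p ^ (n * j) = y := by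
    intro j
    induction j with
    | zero => simp
    | succ j ih => rw [Nat.mul_succ, pow_add, pow_mul, ih, h]
  conv_lhs => rw [← Nat.div_add_mod k n, pow_add, pow_mul, hmul]

lemma exists_pow_seven_eq_one_ne_one {F : Type*} [Field F] [Fintype F] {m : ℕ}
    (hF : Fintype.card F = (2 ^ m) ^ 3) : ∃ u : F, u ^ 7 = 1 ∧ u ≠ 1 := by
  have h7 : 7 ∣ Nat.card Fˣ := by
    rw [Nat.card_units, Nat.card_eq_fintype_card, hF, ← pow_mul, mul_comm, pow_mul]
    exact Nat.sub_one_dvd_pow_sub_one (2 ^ 3) m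
  have : Fact (Nat.Prime 7) := ⟨by norm_num⟩
  obtain ⟨ζ, hζ⟩ := exists_prime_orderOf_dvd_card' 7 h7
  refine ⟨ζ, by rw [← Units.val_pow_eq_pow_val, ← hζ, pow_orderOf_eq_one, Units.val_one], ?_⟩
  rw [Ne, Units.val_eq_one, ← orderOf_eq_one_iff, hζ]
  norm_num

def linearizedTrinomial (F : Type*) [CommRing F] [CharP F 2] (m : ℕ) : F →+ F :=
  AddMonoidHom.id F + (frobenius F 2 : F →+ F) + (iterateFrobenius F 2 (2 * m) : F →+ F)

lemma linearizedTrinomial_apply {F : Type*} [CommRing F] [CharP F 2] (m : ℕ) (y : F) :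
    linearizedTrinomial F m y = y + y ^ 2 + y ^ (2 ^ m) ^ 2 := by
  simp [linearizedTrinomial, iterateFrobenius_def, frobenius_def, ← pow_mul, mul_comm]

lemma linearizedTrinomial_of_pow_eight_eq_self {F : Type*} [CommRing F] [CharP F 2] (m : ℕ)
    {y : F} (hy : y ^ 2 ^ 3 = y) :
    linearizedTrinomial F m y = y + y ^ 2 + y ^ 2 ^ (2 * m % 3) := by
  rw [linearizedTrinomial_apply, ← pow_mul, mul_comm, pow_pow_eq_pow_pow_mod hy]

section LinearizedTrinomial

variable {F : Type*} [Field F] [Fintype F] [CharP F 2] {m : ℕ}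
  (hF : Fintype.card F = (2 ^ m) ^ 3)
include hF

lemma linearizedTrinomial_pow_one_add (x : F) :
    linearizedTrinomial F m (x ^ (1 + 2 ^ m)) =
      x ^ (1 + 2 ^ m) + x ^ (1 + (2 ^ m) ^ 2) + x ^ (2 * 2 ^ m + 2) := by
  have hcube : x ^ ((1 + 2 ^ m) * (2 ^ m) ^ 2) = x ^ (1 + (2 ^ m) ^ 2) := by
    rw [show (1 + 2 ^ m) * (2 ^ m) ^ 2 = (2 ^ m) ^ 2 + (2 ^ m) ^ 3 by ring, pow_add,
      ← hF, FiniteField.pow_card, ← pow_succ, add_comm]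
  rw [linearizedTrinomial_apply, ← pow_mul, ← pow_mul, hcube]
  ring

lemma pow_eight_eq_self_of_linearizedTrinomial_eq_zero {y : F}
    (hy : linearizedTrinomial F m y = 0) : y ^ 2 ^ 3 = y := by
  set τ := iterateFrobenius F 2 m
  have hτ : ∀ z, τ z = z ^ 2 ^ m := fun z => iterateFrobenius_def ..
  have hτττ : ∀ z, τ (τ (τ z)) = z := by
    intro z
    rw [hτ, hτ, hτ, ← pow_mul, ← pow_mul, show 2 ^ m * (2 ^ m * 2 ^ m) = (2 ^ m) ^ 3 by ring,
      ← hF, FiniteField.pow_card]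
  have hττ : τ (τ y) = y + y ^ 2 := by
    rw [linearizedTrinomial_apply, CharTwo.add_eq_zero] at hy
    rw [hτ, hτ, ← pow_mul, ← sq, hy]
  have h1 : τ y = y + y ^ 4 := by
    rw [← hτττ (τ y), hττ]
    simp only [map_add, map_pow, hττ]
    ring_nf; reduce_mod_char!
  have h2 : y + y ^ 2 = y + y ^ 16 := by
    rw [← hττ, h1]
    simp only [map_add, map_pow, h1]
    ring_nf; reduce_mod_char!
  exact CharTwo.sq_injective (by linear_combination h2.symm : (y ^ 2 ^ 3) ^ 2 = y ^ 2)

lemma linearizedTrinomial_injective (hm : m % 3 ≠ 1) : Injective (linearizedTrinomial F m) := by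
  refine (injective_iff_map_eq_zero _).mpr fun y hy => ?_
  rw [linearizedTrinomial_of_pow_eight_eq_self m
    (pow_eight_eq_self_of_linearizedTrinomial_eq_zero hF hy)] at hy
  rcases (by omega : 2 * m % 3 = 0 ∨ 2 * m % 3 = 1) with h | h
  · rw [h, pow_zero, pow_one, add_right_comm, CharTwo.add_self_eq_zero, zero_add] at hy
    exact pow_eq_zero_iff two_ne_zero |>.mp hy
  · rwa [h, pow_one, add_assoc, CharTwo.add_self_eq_zero, add_zero] at hy

lemma exists_ne_zero_linearizedTrinomial_eq_zero (hm : m % 3 = 1) :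
    ∃ y ≠ 0, linearizedTrinomial F m y = 0 := by
  obtain ⟨u, hu7, hu1⟩ := exists_pow_seven_eq_one_ne_one hF
  have hu0 : u ≠ 0 := by rintro rfl; simp at hu7
  have hu8 : u ^ 2 ^ 3 = u := by rw [show 2 ^ 3 = 7 + 1 by rfl, pow_succ, hu7, one_mul]
  have hy8 : (u ^ 2 + u) ^ 2 ^ 3 = u ^ 2 + u := by rw [add_pow_char_pow, pow_right_comm, hu8]
  refine ⟨u ^ 2 + u, ?_, ?_⟩
  · rw [sq, ← mul_add_one]
    exact mul_ne_zero hu0 (mt CharTwo.add_eq_zero.mp hu1)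
  -- `y ↦ y + y ^ 2 + y ^ 4` composed with `u ↦ u ^ 2 + u` is `u ↦ u ^ 8 + u`
  rw [linearizedTrinomial_of_pow_eight_eq_self m hy8, show 2 * m % 3 = 2 by omega]
  linear_combination (norm := ring_nf) hu8
  reduce_mod_char!

lemma linearizedTrinomial_injective_iff : Injective (linearizedTrinomial F m) ↔ m % 3 ≠ 1 := by
  refine ⟨fun h hm => ?_, linearizedTrinomial_injective hF⟩
  obtain ⟨y, hy0, hy⟩ := exists_ne_zero_linearizedTrinomial_eq_zero hF hm
  exact hy0 ((injective_iff_map_eq_zero _).mp h y hy)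

end LinearizedTrinomial

theorem stmt_7 (m : ℕ) (hm : 0 < m) (F : Type*) [Field F] [Fintype F]
    (hF : Fintype.card F = (2^m)^3) :
    Function.Bijective (fun x : F =>
      x^(1 + 2^m) + x^(1 + (2^m)^2) + x^(2*2^m + 2)) ↔ m % 3 ≠ 1 := by
  have : CharP F 2 := charP_of_card_eq_prime_pow (hF.trans (pow_mul ..).symm)
  have hpow : Bijective (fun x : F => x ^ (1 + 2 ^ m)) := by
    refine Finite.injective_iff_bijective.mp
      (pow_injective_of_coprime_card_units (by positivity) ?_)
    rw [Nat.card_units, Nat.card_eq_fintype_card, hF]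
    exact Nat.coprime_pow_three_sub_one_one_add (Nat.even_pow.mpr ⟨even_two, hm.ne'⟩)
  have hcomp : (fun x : F => x^(1 + 2^m) + x^(1 + (2^m)^2) + x^(2*2^m + 2)) =
      linearizedTrinomial F m ∘ (· ^ (1 + 2 ^ m)) :=
    funext fun x => (linearizedTrinomial_pow_one_add hF x).symm
  rw [hcomp, Bijective.of_comp_iff _ hpow, ← Finite.injective_iff_bijective,
    linearizedTrinomial_injective_iff hF]
end

section
/- Let q = p^m with p an odd prime, and let f_5(X) = 2X^{q^2} + X^{q^2-q+1} + X^{q^2+q-1} on F_{q^3} (f_5(0)=0). Then for all X ∈ F_{q^3}, g(f_5(X)) = X, where g(Y) = (−Y + Y^q − Y^{q^2} + 2Y^{(q^2+1)/2})/4. In particular g is the compositional inverse of f_5. -/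
/-!
Write `b = x^q` and `c = x^{q^2}`; for `x ≠ 0`, `y = f₅(x) = c (x + b)^2 / (x b)`. Since the
Frobenius `z ↦ z^q` permutes `x, b, c` cyclically, `y^q` and `y^{q^2}` are obtained by rotating
`x, b, c`. Moreover `y = (x + b)^2 x^{q^2 - q - 1}` and `(q^2 - q - 1)(q^2 + 1)/2 ≡ -1` modulo
`q^3 - 1`, so `y^{(q^2+1)/2} = (c + x)(x + b)/x` with no sign ambiguity. Substituting these
into `g` leaves a rational identity in `x, b, c`.
-/

section

variable {F : Type*} [Field F] {q : ℕ}

theorem two_mul_add_mul_inv_add_mul_inv {x b : F} (hx : x ≠ 0) (hb : b ≠ 0) (c : F) :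
    2 * c + c * x * b⁻¹ + c * b * x⁻¹ = c * (x + b) ^ 2 / (x * b) := by
  field_simp
  ring

theorem cyclic_rational_identity {x b c : F} (hx : x ≠ 0) (hb : b ≠ 0) (hc : c ≠ 0) :
    -(c * (x + b) ^ 2 / (x * b)) + x * (b + c) ^ 2 / (b * c) - b * (c + x) ^ 2 / (c * x)
      + 2 * ((c + x) * (x + b) / x) = 4 * x := by
  field_simp
  ring

theorem rotate_pow_of_add_pow (hadd : ∀ u v : F, (u + v) ^ q = u ^ q + v ^ q) {x b c : F}
    (hxb : x ^ q = b) (hbc : b ^ q = c) (hcx : c ^ q = x) :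
    (c * (x + b) ^ 2 / (x * b)) ^ q = x * (b + c) ^ 2 / (b * c) := by
  rw [div_pow, mul_pow, mul_pow, ← pow_mul, mul_comm 2, pow_mul, hadd, hxb, hbc, hcx]

theorem zpow_mul_half_eq_inv (hq : Odd q) {x : F} (hx0 : x ≠ 0) (hx : x ^ q ^ 3 = x) :
    x ^ (((q : ℤ) ^ 2 - q - 1) * ((q ^ 2 + 1) / 2 : ℕ)) = x⁻¹ := by
  obtain ⟨k, rfl⟩ := hq
  have hhalf : ((2 * k + 1) ^ 2 + 1) / 2 = 2 * k ^ 2 + 2 * k + 1 :=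
    Nat.div_eq_of_eq_mul_left two_pos (by ring)
  have hunit : x ^ (((2 * k + 1 : ℕ) : ℤ) ^ 3 - 1) = 1 := by
    rw [zpow_sub_one₀ hx0, ← Nat.cast_pow, zpow_natCast, hx, mul_inv_cancel₀ hx0]
  rw [hhalf, show (((2 * k + 1 : ℕ) : ℤ) ^ 2 - (2 * k + 1 : ℕ) - 1)
      * ((2 * k ^ 2 + 2 * k + 1 : ℕ) : ℤ) = (((2 * k + 1 : ℕ) : ℤ) ^ 3 - 1) * k - 1 by
    push_cast; ring, zpow_sub_one₀ hx0, zpow_mul, hunit, one_zpow, one_mul]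

theorem pow_half_sq_add_one (hq : Odd q) (hadd : ∀ u v : F, (u + v) ^ q = u ^ q + v ^ q)
    {x : F} (hx0 : x ≠ 0) (hx : x ^ q ^ 3 = x) :
    (x ^ q ^ 2 * (x + x ^ q) ^ 2 / (x * x ^ q)) ^ ((q ^ 2 + 1) / 2)
      = (x ^ q ^ 2 + x) * (x + x ^ q) / x := by
  have hmonomial : x ^ q ^ 2 / (x * x ^ q) = x ^ ((q : ℤ) ^ 2 - q - 1) := by
    rw [sub_sub, zpow_sub₀ hx0, zpow_add_one₀ hx0, mul_comm x]
    norm_cast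
  have hconj : (x + x ^ q) ^ q ^ 2 = x ^ q ^ 2 + x := by
    rw [sq, pow_mul, hadd, ← pow_mul, hadd, ← pow_mul, ← pow_mul, ← sq, ← pow_succ, hx]
  have htwo : 2 * ((q ^ 2 + 1) / 2) = q ^ 2 + 1 := by
    have := Nat.odd_iff.mp (hq.pow (n := 2))
    omega
  rw [mul_div_right_comm, hmonomial, mul_pow, ← zpow_natCast (x ^ _), ← zpow_mul,
    zpow_mul_half_eq_inv hq hx0 hx, ← pow_mul, htwo, pow_succ, hconj, inv_mul_eq_div]

end

theorem stmt_16_general (p m : ℕ) (hp : p.Prime) (hodd : Odd p)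
    (F : Type*) [Field F] [Fintype F] (hF : Fintype.card F = (p^m)^3)
    (f g : F → F)
    (hf : ∀ x : F, f x = 2 * x^((p^m)^2) + x^((p^m)^2) * x * (x^(p^m))⁻¹
        + x^((p^m)^2) * x^(p^m) * x⁻¹)
    (hg : ∀ y : F, g y = (-y + y^(p^m) - y^((p^m)^2)
        + 2 * y^(((p^m)^2 + 1) / 2)) / 4) :
    ∀ x : F, g (f x) = x := by
  have : Fact p.Prime := ⟨hp⟩
  have : CharP F p := charP_of_card_eq_prime_pow (f := m * 3) (by rw [hF, pow_mul])
  have h4 : (4 : F) ≠ 0 := by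
    have h2 : (2 : F) ≠ 0 := Ring.two_ne_zero <| by
      rw [ringChar.eq F p]
      rintro rfl
      exact absurd hodd (by decide)
    simpa [show (4 : F) = 2 * 2 by norm_num] using h2
  set q := p ^ m
  have hq0 : q ≠ 0 := pow_ne_zero m hp.ne_zero
  have hadd (u v : F) : (u + v) ^ q = u ^ q + v ^ q := add_pow_char_pow u v p m
  intro x
  rcases eq_or_ne x 0 with rfl | hx0
  · have hhalf : (q ^ 2 + 1) / 2 ≠ 0 := by have := pow_pos (Nat.pos_of_ne_zero hq0) 2; omega
    simp [hf, hg, hq0, hhalf]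
  have hcyc : x ^ q ^ 3 = x := hF ▸ FiniteField.pow_card x
  have hbc : (x ^ q) ^ q = x ^ q ^ 2 := by rw [sq, pow_mul]
  have hcx : (x ^ q ^ 2) ^ q = x := by rw [← pow_mul, ← pow_succ, hcyc]
  have hy := hf x
  rw [two_mul_add_mul_inv_add_mul_inv hx0 (pow_ne_zero q hx0)] at hy
  have hyq := rotate_pow_of_add_pow hadd rfl hbc hcx
  have hyq2 := rotate_pow_of_add_pow hadd hbc hcx rfl
  rw [hg, show f x ^ q ^ 2 = (f x ^ q) ^ q by rw [sq, pow_mul], hy, hyq, hyq2,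
    pow_half_sq_add_one hodd.pow hadd hx0 hcyc,
    cyclic_rational_identity hx0 (pow_ne_zero q hx0) (pow_ne_zero _ hx0), mul_div_cancel_left₀ x h4]

theorem stmt_16 (p m : ℕ) (hp : p.Prime) (hodd : Odd p) (hm : 0 < m)
    (F : Type*) [Field F] [Fintype F] (hF : Fintype.card F = (p^m)^3)
    (f g : F → F)
    (hf : ∀ x : F, f x = 2 * x^((p^m)^2) + x^((p^m)^2) * x * (x^(p^m))⁻¹
        + x^((p^m)^2) * x^(p^m) * x⁻¹)
    (hg : ∀ y : F, g y = (-y + y^(p^m) - y^((p^m)^2)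
        + 2 * y^(((p^m)^2 + 1) / 2)) / 4) :
    ∀ x : F, g (f x) = x :=
  stmt_16_general p m hp hodd F hF f g hf hg
end
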